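/- Let k ≥ 1, p ≥ 2 and M > 0. There exists a constant c = c(k,p,M) > 0 such that for all z, η ∈ ℝ^k with |η| ≤ M one has |V_p(z) − V_p(η)| ≤ c |V_p(z − η)|. -/

import Mathlib

noncomputable def Vp (p : ℝ) {E : Type*} [NormedAddCommGroup E] [NormedSpace ℝ E] (z : E) : E :=
  ((1 + ‖z‖ ^ 2) ^ ((p - 2) / 4)) • z

/-! For `p ≥ 2` the derivative of `Vp p` at `x` has operator norm at most
`(p / 2) (1 + ‖x‖²)^((p - 2) / 4)`. On the ball of radius `r = ‖z - η‖` around `η` we have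
`1 + ‖x‖² ≤ 2 (1 + M²) (1 + r²)`, so the mean value inequality bounds `‖Vp p z - Vp p η‖` by
`(p / 2) (2 (1 + M²))^((p - 2) / 4)` times `(1 + r²)^((p - 2) / 4) r = ‖Vp p (z - η)‖`. -/

open ContinuousLinearMap Metric RealInnerProductSpace

theorem one_add_add_sq_le (a b : ℝ) : 1 + (a + b) ^ 2 ≤ 2 * (1 + a ^ 2) * (1 + b ^ 2) := by
  nlinarith [sq_nonneg (a - b), sq_nonneg (a * b)]

section InnerProductSpace

variable {E : Type*} [NormedAddCommGroup E] [InnerProductSpace ℝ E]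

noncomputable def fderivVp (p : ℝ) (x : E) : E →L[ℝ] E :=
  (1 + ‖x‖ ^ 2) ^ ((p - 2) / 4) • ContinuousLinearMap.id ℝ E +
    (((p - 2) / 2 * (1 + ‖x‖ ^ 2) ^ ((p - 2) / 4 - 1)) • innerSL ℝ x).smulRight x

theorem norm_Vp (p : ℝ) (z : E) : ‖Vp p z‖ = (1 + ‖z‖ ^ 2) ^ ((p - 2) / 4) * ‖z‖ := by
  rw [Vp, norm_smul, Real.norm_of_nonneg (by positivity)]

theorem hasFDerivAt_Vp (p : ℝ) (x : E) : HasFDerivAt (Vp p) (fderivVp p x) x := by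
  have hA : HasFDerivAt (fun y : E => 1 + ‖y‖ ^ 2) (2 • innerSL ℝ x) x := by
    simpa using (hasFDerivAt_id x).norm_sq.const_add 1
  refine ((hA.rpow_const (p := (p - 2) / 4) (Or.inl (by positivity))).smul
    (hasFDerivAt_id x)).congr_fderiv ?_
  ext v
  simp only [fderivVp, add_apply, smul_apply, smulRight_apply, id_apply, id, nsmul_eq_mul]
  ring_nf

theorem norm_fderivVp_le {p : ℝ} (hp : 2 ≤ p) (x : E) :
    ‖fderivVp p x‖ ≤ p / 2 * (1 + ‖x‖ ^ 2) ^ ((p - 2) / 4) := by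
  set A := 1 + ‖x‖ ^ 2
  have hA : 0 < A := by positivity
  have hc : 0 ≤ (p - 2) / 2 * A ^ ((p - 2) / 4 - 1) := by
    have : 0 ≤ p - 2 := by linarith
    positivity
  refine opNorm_le_bound _ (by positivity) fun v => ?_
  simp only [fderivVp, add_apply, smul_apply, smulRight_apply, id_apply, innerSL_apply_apply]
  calc ‖A ^ ((p - 2) / 4) • v + ((p - 2) / 2 * A ^ ((p - 2) / 4 - 1) * ⟪x, v⟫) • x‖
      ≤ A ^ ((p - 2) / 4) * ‖v‖ + (p - 2) / 2 * A ^ ((p - 2) / 4 - 1) * |⟪x, v⟫| * ‖x‖ := by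
        refine (norm_add_le _ _).trans_eq ?_
        rw [norm_smul, norm_smul, Real.norm_eq_abs, Real.norm_eq_abs, abs_mul,
          abs_of_nonneg hc, abs_of_nonneg (by positivity)]
    _ ≤ A ^ ((p - 2) / 4) * ‖v‖ + (p - 2) / 2 * A ^ ((p - 2) / 4 - 1) * (A * ‖v‖) := by
        have hxv : |⟪x, v⟫| * ‖x‖ ≤ A * ‖v‖ := by
          have := abs_real_inner_le_norm x v
          nlinarith [norm_nonneg x, norm_nonneg v, mul_nonneg (norm_nonneg x) (norm_nonneg v)]
        rw [mul_assoc _ |⟪x, v⟫|]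
        gcongr
    _ = p / 2 * A ^ ((p - 2) / 4) * ‖v‖ := by
        rw [Real.rpow_sub_one hA.ne']
        field_simp
        ring

theorem norm_Vp_sub_Vp_le {p M : ℝ} (hp : 2 ≤ p) {z η : E} (hη : ‖η‖ ≤ M) :
    ‖Vp p z - Vp p η‖ ≤ p / 2 * (2 * (1 + M ^ 2)) ^ ((p - 2) / 4) * ‖Vp p (z - η)‖ := by
  set r := ‖z - η‖
  have hbound : ∀ x ∈ closedBall η r, 1 + ‖x‖ ^ 2 ≤ 2 * (1 + M ^ 2) * (1 + r ^ 2) := by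
    intro x hx
    have hx : ‖x‖ ≤ ‖η‖ + r :=
      (norm_le_norm_add_norm_sub' x η).trans (by gcongr; exact mem_closedBall_iff_norm.1 hx)
    calc 1 + ‖x‖ ^ 2 ≤ 1 + (‖η‖ + r) ^ 2 := by gcongr
      _ ≤ 2 * (1 + ‖η‖ ^ 2) * (1 + r ^ 2) := one_add_add_sq_le _ _
      _ ≤ 2 * (1 + M ^ 2) * (1 + r ^ 2) := by gcongr
  have hmvt := (convex_closedBall η r).norm_image_sub_le_of_norm_hasFDerivWithin_le
    (fun x _ => (hasFDerivAt_Vp p x).hasFDerivWithinAt)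
    (fun x hx => (norm_fderivVp_le hp x).trans
      (mul_le_mul_of_nonneg_left (Real.rpow_le_rpow (by positivity) (hbound x hx) (by linarith))
        (by linarith)))
    (mem_closedBall_self (norm_nonneg _)) (mem_closedBall_iff_norm.2 le_rfl)
  rw [Real.mul_rpow (by positivity) (by positivity)] at hmvt
  rw [norm_Vp]
  linarith

end InnerProductSpace

theorem stmt_6_general (k : ℕ) (p : ℝ) (hp : 2 ≤ p) (M : ℝ) :
    ∃ c : ℝ, 0 < c ∧ ∀ z η : EuclideanSpace ℝ (Fin k), ‖η‖ ≤ M →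
      ‖Vp p z - Vp p η‖ ≤ c * ‖Vp p (z - η)‖ :=
  ⟨p / 2 * (2 * (1 + M ^ 2)) ^ ((p - 2) / 4), mul_pos (by linarith) (by positivity),
    fun _ _ hη => norm_Vp_sub_Vp_le hp hη⟩

theorem stmt_6 (k : ℕ) (hk : 1 ≤ k) (p : ℝ) (hp : 2 ≤ p) (M : ℝ) (hM : 0 < M) :
    ∃ c : ℝ, 0 < c ∧ ∀ z η : EuclideanSpace ℝ (Fin k), ‖η‖ ≤ M →
      ‖Vp p z - Vp p η‖ ≤ c * ‖Vp p (z - η)‖ :=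
  stmt_6_general k p hp M
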